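/- arXiv:1703.04069 — 3 statements merged into one kernel-verified Lean document; each statement's English description precedes it below -/
import Mathlib

section
/- Let (X, d) be a compact metric space, f : X → X a continuous map, and m a Borel probability measure on X. Then the set of SRB-like measures for f (with respect to the reference measure m) is nonempty. -/
/-! Since `X` is compact, so is the space of probability measures on `X`, and every point has a
nonempty set `pω(x)`. If no measure were SRB-like, every `μ` would have a neighbourhood `U_μ` for
which the points with a limit point in `U_μ` form an `m`-null set; finitely many `U_μ` cover the
space of measures, so `X` itself would be `m`-null. -/

open MeasureTheory Filter Set
open scoped ENNReal NNReal

variable {X : Type*} [MetricSpace X] [CompactSpace X] [MeasurableSpace X] [BorelSpace X]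

/-- The `n`-th empirical measure (with `n+1` points) of `x` under iteration of `f`:
`σ_{n+1}(x) = (1/(n+1)) ∑_{i=0}^{n} δ_{f^i(x)}`. -/
noncomputable def empiricalMeasure (f : X → X) (x : X) (n : ℕ) : Measure X :=
  ((n + 1 : ℝ≥0∞))⁻¹ • ∑ i ∈ Finset.range (n + 1), Measure.dirac (f^[i] x)

theorem empiricalMeasure_isProbabilityMeasure (f : X → X) (x : X) (n : ℕ) :
    IsProbabilityMeasure (empiricalMeasure f x n) := by
  constructor
  simp [empiricalMeasure, Measure.smul_apply, Measure.finset_sum_apply,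
    Measure.dirac_apply_of_mem (Set.mem_univ _)]
  exact ENNReal.inv_mul_cancel (by simp) (by simp)

/-- The `n`-th empirical measure as a Borel probability measure. -/
noncomputable def empirical (f : X → X) (x : X) (n : ℕ) : ProbabilityMeasure X :=
  ⟨empiricalMeasure f x n, empiricalMeasure_isProbabilityMeasure f x n⟩

/-- `pω(x)`: the set of weak-* limit points of the sequence of empirical measures of `x`,
in the space of Borel probability measures with the weak-* topology. -/
def pOmega (f : X → X) (x : X) : Set (ProbabilityMeasure X) :=
  {ν | MapClusterPt ν atTop (empirical f x)}

/-- `μ` is SRB-like (observable) for `f` w.r.t. the reference measure `m`: for every `ε > 0`,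
the set `A_ε(μ)` of points `x` having some weak-* limit point of its empirical measures at
Lévy–Prokhorov distance `< ε` from `μ` has positive `m`-measure. -/
def IsSRBLike (f : X → X) (m : Measure X) (μ : ProbabilityMeasure X) : Prop :=
  ∀ ε : ℝ, 0 < ε →
    0 < m {x | ∃ ν ∈ pOmega f x,
      levyProkhorovDist (ν : Measure X) (μ : Measure X) < ε}

open Topology TopologicalSpace

theorem exists_forall_mem_nhds_measure_pos {α Y : Type*} [MeasurableSpace α]
    [TopologicalSpace Y] [CompactSpace Y] {m : Measure α} (hm : m ≠ 0) {S : α → Set Y}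
    (hS : ∀ x, (S x).Nonempty) :
    ∃ y, ∀ U ∈ 𝓝 y, 0 < m {x | (S x ∩ U).Nonempty} := by
  by_contra! h
  choose U hU hnull using h
  obtain ⟨t, ht⟩ := CompactSpace.elim_nhds_subcover U hU
  have hcover : univ ⊆ ⋃ y ∈ t, {x | (S x ∩ U y).Nonempty} := by
    intro x _
    obtain ⟨ν, hν⟩ := hS x
    obtain ⟨y, hyt, hνy⟩ := mem_iUnion₂.1 (eq_univ_iff_forall.1 ht ν)
    exact mem_iUnion₂.2 ⟨y, hyt, ν, hν, hνy⟩
  refine hm (Measure.measure_univ_eq_zero.1 (measure_mono_null hcover ?_))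
  exact (measure_biUnion_null_iff t.countable_toSet).2 fun y _ ↦ nonpos_iff_eq_zero.1 (hnull y)

theorem ProbabilityMeasure.setOf_levyProkhorovDist_lt_mem_nhds {Ω : Type*} [PseudoMetricSpace Ω]
    [SeparableSpace Ω] [MeasurableSpace Ω] [OpensMeasurableSpace Ω] (μ : ProbabilityMeasure Ω)
    {ε : ℝ} (hε : 0 < ε) :
    {ν : ProbabilityMeasure Ω | levyProkhorovDist (ν : Measure Ω) μ < ε} ∈ 𝓝 μ :=
  LevyProkhorov.continuous_ofMeasure_probabilityMeasure.tendsto μ (Metric.ball_mem_nhds _ hε)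

theorem pOmega_nonempty (f : X → X) (x : X) : (pOmega f x).Nonempty :=
  let ⟨ν, _, hν⟩ := isCompact_univ.exists_mapClusterPt (f := atTop) (u := empirical f x)
    (le_principal_iff.2 univ_mem)
  ⟨ν, hν⟩

theorem exists_SRBLike_general (f : X → X)
    (m : Measure X) [IsProbabilityMeasure m] :
    ∃ μ : ProbabilityMeasure X, IsSRBLike f m μ :=
  let ⟨μ, hμ⟩ := exists_forall_mem_nhds_measure_pos (IsProbabilityMeasure.ne_zero m)
    (pOmega_nonempty f)
  ⟨μ, fun _ hε ↦ hμ _ (ProbabilityMeasure.setOf_levyProkhorovDist_lt_mem_nhds μ hε)⟩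

/-- The set of SRB-like measures is nonempty. -/
theorem exists_SRBLike (f : X → X) (hf : Continuous f)
    (m : Measure X) [IsProbabilityMeasure m] :
    ∃ μ : ProbabilityMeasure X, IsSRBLike f m μ :=
  exists_SRBLike_general f m
end

section
/- Let (X, d) be a compact metric space, f : X → X a continuous map, and m a Borel probability measure on X. Then every SRB-like measure for f (with respect to m) is f-invariant, i.e. μ(f⁻¹(B)) = μ(B) for every Borel set B ⊆ X. -/
open MeasureTheory Filter Set
open scoped ENNReal NNReal

variable {X : Type*} [MetricSpace X] [CompactSpace X] [MeasurableSpace X] [BorelSpace X]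

/-! Along the empirical measures of any orbit, `∫ g ∘ f - ∫ g` telescopes to
`(g (f^[n+1] x) - g x) / (n + 1) → 0`, so every measure in `pω(x)` is `f`-invariant.
An SRB-like measure is a Lévy–Prokhorov limit of such measures, and the invariant
probability measures form a weak-* closed set, push-forward by the continuous map `f`
being weak-* continuous. -/

open scoped Topology
open BoundedContinuousFunction

section Invariance

variable {Ω : Type*} [TopologicalSpace Ω] [MeasurableSpace Ω] [HasOuterApproxClosed Ω]
  [BorelSpace Ω]

lemma isClosed_setOf_map_eq {f : Ω → Ω} (hf : Continuous f) :
    IsClosed {ν : ProbabilityMeasure Ω | (ν : Measure Ω).map f = ν} := by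
  have hset : {ν : ProbabilityMeasure Ω | (ν : Measure Ω).map f = ν}
      = {ν | ν.map hf.measurable.aemeasurable = ν} := by
    ext ν
    simp only [mem_ofPred_eq, ← ProbabilityMeasure.toMeasure_injective.eq_iff,
      ProbabilityMeasure.toMeasure_map]
  rw [hset]
  exact isClosed_eq (ProbabilityMeasure.continuous_map hf) continuous_id

lemma map_eq_of_forall_integral_comp_eq {f : Ω → Ω} (hf : Continuous f)
    (ν : Measure Ω) [IsFiniteMeasure ν]
    (h : ∀ g : Ω →ᵇ ℝ, ∫ y, g (f y) ∂ν = ∫ y, g y ∂ν) :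
    ν.map f = ν := by
  refine ext_of_forall_integral_eq_of_IsFiniteMeasure fun g ↦ ?_
  rw [integral_map hf.aemeasurable g.continuous.aestronglyMeasurable]
  exact h g

lemma map_eq_of_mapClusterPt {f : Ω → Ω} (hf : Continuous f)
    {ι : Type*} {l : Filter ι} {μs : ι → ProbabilityMeasure Ω}
    {ν : ProbabilityMeasure Ω} (hν : MapClusterPt ν l μs)
    (h : ∀ g : Ω →ᵇ ℝ,
      Tendsto (fun i ↦ ∫ y, g (f y) ∂(μs i : Measure Ω) - ∫ y, g y ∂(μs i : Measure Ω)) l (𝓝 0)) :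
    (ν : Measure Ω).map f = ν := by
  refine map_eq_of_forall_integral_comp_eq hf ν fun g ↦ sub_eq_zero.mp ?_
  let defect : ProbabilityMeasure Ω → ℝ := fun μ ↦ ∫ y, g (f y) ∂(μ : Measure Ω) - ∫ y, g y ∂μ
  have hdefect : Continuous defect :=
    (ProbabilityMeasure.continuous_integral_boundedContinuousFunction
      (g.compContinuous ⟨f, hf⟩)).sub
      (ProbabilityMeasure.continuous_integral_boundedContinuousFunction g)
  exact eq_of_nhds_neBot (ClusterPt.mono (hν.continuousAt_comp hdefect.continuousAt) (h g)).neBot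

end Invariance

lemma mem_closure_of_forall_levyProkhorovDist_lt {Ω : Type*} [PseudoMetricSpace Ω]
    [TopologicalSpace.SeparableSpace Ω] [MeasurableSpace Ω] [OpensMeasurableSpace Ω]
    {S : Set (ProbabilityMeasure Ω)} {μ : ProbabilityMeasure Ω}
    (h : ∀ ε > 0, ∃ ν ∈ S, levyProkhorovDist (ν : Measure Ω) μ < ε) :
    μ ∈ closure S := by
  let e := LevyProkhorov.probabilityMeasureHomeomorph (Ω := Ω)
  have he : e μ ∈ closure (e '' S) := by
    refine Metric.mem_closure_iff.mpr fun ε hε ↦ ?_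
    obtain ⟨ν, hνS, hν⟩ := h ε hε
    refine ⟨e ν, mem_image_of_mem e hνS, ?_⟩
    rw [LevyProkhorov.dist_probabilityMeasure_def, levyProkhorovDist_comm]
    exact hν
  rwa [← e.image_closure, e.injective.mem_set_image] at he

section Empirical

variable (f : X → X) (x : X)

lemma integral_empiricalMeasure (φ : X → ℝ) (n : ℕ) :
    ∫ y, φ y ∂(empiricalMeasure f x n)
      = ((n : ℝ) + 1)⁻¹ * ∑ i ∈ Finset.range (n + 1), φ (f^[i] x) := by
  rw [empiricalMeasure, integral_smul_measure,
    integral_finsetSum_measure fun i _ ↦ integrable_dirac enorm_lt_top]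
  simp only [ENNReal.toReal_inv, integral_dirac, smul_eq_mul, mul_eq_mul_right_iff, inv_inj]
  left
  exact_mod_cast ENNReal.toReal_natCast (n + 1)

lemma integral_comp_sub_integral_empiricalMeasure (φ : X → ℝ) (n : ℕ) :
    ∫ y, φ (f y) ∂(empiricalMeasure f x n) - ∫ y, φ y ∂(empiricalMeasure f x n)
      = ((n : ℝ) + 1)⁻¹ * (φ (f^[n + 1] x) - φ x) := by
  simp only [integral_empiricalMeasure, ← mul_sub, ← Finset.sum_sub_distrib,
    ← Function.iterate_succ_apply' f]
  rw [Finset.sum_range_sub (fun i ↦ φ (f^[i] x)), Function.iterate_zero_apply]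

lemma tendsto_integral_comp_sub_integral_empiricalMeasure (g : X →ᵇ ℝ) :
    Tendsto (fun n ↦ ∫ y, g (f y) ∂(empiricalMeasure f x n) - ∫ y, g y ∂(empiricalMeasure f x n))
      atTop (𝓝 0) := by
  simp_rw [integral_comp_sub_integral_empiricalMeasure]
  refine squeeze_zero_norm (fun n ↦ ?_)
    (by simpa using (tendsto_one_div_add_atTop_nhds_zero_nat (𝕜 := ℝ)).mul_const (2 * ‖g‖))
  rw [norm_mul, norm_inv, ← dist_eq_norm, Real.norm_of_nonneg (by positivity)]
  gcongr
  exact g.dist_le_two_norm _ _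

end Empirical

lemma map_eq_of_mem_pOmega {f : X → X} (hf : Continuous f) {x : X} {ν : ProbabilityMeasure X}
    (hν : ν ∈ pOmega f x) :
    (ν : Measure X).map f = ν :=
  map_eq_of_mapClusterPt hf hν (tendsto_integral_comp_sub_integral_empiricalMeasure f x)

theorem SRBLike_invariant_general (f : X → X) (hf : Continuous f)
    (m : Measure X)
    (μ : ProbabilityMeasure X) (hμ : IsSRBLike f m μ) :
    ∀ B : Set X, MeasurableSet B → (μ : Measure X) (f ⁻¹' B) = (μ : Measure X) B := by
  intro B hB
  have hμ_mem : μ ∈ closure {ν : ProbabilityMeasure X | (ν : Measure X).map f = ν} := by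
    refine mem_closure_of_forall_levyProkhorovDist_lt fun ε hε ↦ ?_
    obtain ⟨x, ν, hν, hνμ⟩ := nonempty_of_measure_ne_zero (hμ ε hε).ne'
    exact ⟨ν, map_eq_of_mem_pOmega hf hν, hνμ⟩
  rw [← Measure.map_apply hf.measurable hB, (isClosed_setOf_map_eq hf).closure_subset hμ_mem]

/-- Every SRB-like measure is `f`-invariant. -/
theorem SRBLike_invariant (f : X → X) (hf : Continuous f)
    (m : Measure X) [IsProbabilityMeasure m]
    (μ : ProbabilityMeasure X) (hμ : IsSRBLike f m μ) :
    ∀ B : Set X, MeasurableSet B → (μ : Measure X) (f ⁻¹' B) = (μ : Measure X) B :=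
  SRBLike_invariant_general f hf m μ hμ
end

section
/- (Peano existence theorem.) Let n ≥ 1, let F : ℝ × ℝⁿ → ℝⁿ be continuous, and let (t₀, x₀) ∈ ℝ × ℝⁿ. Then there exist ε > 0 and a continuously differentiable function x : (t₀ - ε, t₀ + ε) → ℝⁿ such that x(t₀) = x₀ and x'(t) = F(t, x(t)) for all t ∈ (t₀ - ε, t₀ + ε). In particular, existence of a local solution of the initial value problem does not require F to be Lipschitz in the space variable. -/
/-!
Approximate `F` uniformly on the unit ball around `(t₀, x₀)` by smooth vector fields `G k`,
all bounded there by one constant `M`. By Picard–Lindelöf each `G k` has a solution on a common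
interval `[t₀ - ε, t₀ + ε]` with `M ε ≤ 1`; these solutions are `M`-Lipschitz and stay in the unit
ball, so by Arzelà–Ascoli a subsequence converges pointwise, and dominated convergence carries
the integral equations `x = x₀ + ∫ G k (τ, x τ)` over to the limit.
-/

open Set Metric Filter Topology MeasureTheory BoundedContinuousFunction
open scoped NNReal ContDiff

section Approximation

variable {V W : Type*} [NormedAddCommGroup V] [NormedSpace ℝ V] [FiniteDimensional ℝ V]
  [NormedAddCommGroup W] [NormedSpace ℝ W] [CompleteSpace W] {f : V → W} {K : Set V}

theorem Continuous.exists_contDiff_forall_mem_dist_lt (hf : Continuous f) (hK : IsCompact K)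
    {ε : ℝ} (hε : 0 < ε) : ∃ g : V → W, ContDiff ℝ ∞ g ∧ ∀ x ∈ K, dist (g x) (f x) < ε := by
  obtain ⟨g, hg, hgf⟩ := (mem_closure_iff_nhds_basis (nhds_basis_uniformity
    uniformity_basis_dist.compactConvergenceUniformity)).1
    (ContinuousMap.dense_setOfPred_contDiff ⟨f, hf⟩) (K, ε) ⟨hK, hε⟩
  exact ⟨g, hg, fun x hx => by simpa [dist_comm] using hgf x hx⟩

theorem Continuous.exists_seq_contDiff_norm_le_tendstoUniformlyOn (hf : Continuous f)
    (hK : IsCompact K) {C : ℝ} (hC : ∀ x ∈ K, ‖f x‖ ≤ C) :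
    ∃ g : ℕ → V → W, (∀ k, ContDiff ℝ ∞ (g k)) ∧ (∀ k, ∀ x ∈ K, ‖g k x‖ ≤ C + 1) ∧
      TendstoUniformlyOn g f atTop K := by
  choose g hg hgf using fun k : ℕ =>
    hf.exists_contDiff_forall_mem_dist_lt hK (Nat.one_div_pos_of_nat (n := k))
  refine ⟨g, hg, fun k x hx => ?_, ?_⟩
  · calc ‖g k x‖ ≤ ‖f x‖ + dist (g k x) (f x) := by
          rw [dist_eq_norm]; exact norm_le_insert' _ _
      _ ≤ C + 1 := by
          gcongr
          · exact hC x hx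
          · exact (hgf k x hx).le.trans (Nat.one_div_le_one_div (Nat.zero_le k) |>.trans_eq
              (by simp))
  · rw [Metric.tendstoUniformlyOn_iff]
    intro ρ hρ
    obtain ⟨N, hN⟩ := exists_nat_one_div_lt hρ
    filter_upwards [eventually_ge_atTop N] with k hk x hx
    rw [dist_comm]
    exact (hgf k x hx).trans (lt_of_le_of_lt (by gcongr) hN)

end Approximation

theorem exists_subseq_tendsto_of_lipschitzWith {X Y : Type*} [MetricSpace X] [CompactSpace X]
    [MetricSpace Y] {s : Set Y} (hs : IsCompact s) {L : ℝ≥0} {f : ℕ → X → Y}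
    (hf : ∀ k, LipschitzWith L (f k)) (hfs : ∀ k x, f k x ∈ s) :
    ∃ g : X → Y, Continuous g ∧ ∃ φ : ℕ → ℕ, StrictMono φ ∧
      ∀ x, Tendsto (fun j => f (φ j) x) atTop (𝓝 (g x)) := by
  let u : ℕ → X →ᵇ Y := fun k => .mkOfCompact ⟨f k, (hf k).continuous⟩
  have hequi : Equicontinuous ((↑) : range u → X → Y) := by
    refine equicontinuous_of_continuity_modulus (fun r => L * r) ?_ _ ?_
    · simpa using (continuous_const_mul (L : ℝ)).tendsto 0
    · rintro x y ⟨_, k, rfl⟩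
      exact (hf k).dist_le_mul x y
  obtain ⟨w, -, φ, hφ, hlim⟩ := (arzela_ascoli s hs (range u)
    (by rintro _ x ⟨k, rfl⟩; exact hfs k x) hequi).tendsto_subseq
    fun k => subset_closure (mem_range_self k)
  exact ⟨w, w.continuous, φ, hφ, fun x => ((continuous_eval_const x).tendsto w).comp hlim⟩

variable {E : Type*} [NormedAddCommGroup E]

theorem mk_mem_closedBall_of_mem_Icc {t₀ t ε r : ℝ} (hεr : ε ≤ r)
    (ht : t ∈ Icc (t₀ - ε) (t₀ + ε)) {x₀ x : E} (hx : x ∈ closedBall x₀ r) :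
    (t, x) ∈ closedBall (t₀, x₀) r := by
  rw [← Real.closedBall_eq_Icc] at ht
  rw [← closedBall_prod_same]
  exact ⟨closedBall_subset_closedBall hεr ht, hx⟩

theorem tendsto_integral_comp_of_tendstoUniformlyOn {E' : Type*} [NormedAddCommGroup E']
    [NormedSpace ℝ E'] {F : ℝ × E → E'} (hF : Continuous F) {G : ℕ → ℝ × E → E'}
    (hG : ∀ k, Continuous (G k)) {K : Set (ℝ × E)} (hGF : TendstoUniformlyOn G F atTop K)
    {M : ℝ} (hGM : ∀ k, ∀ p ∈ K, ‖G k p‖ ≤ M) {y : ℕ → ℝ → E} {z : ℝ → E}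
    (hy : ∀ k, Continuous (y k)) (hyz : ∀ τ, Tendsto (fun k => y k τ) atTop (𝓝 (z τ)))
    {a b : ℝ} (hyK : ∀ k, ∀ τ ∈ uIcc a b, (τ, y k τ) ∈ K) :
    Tendsto (fun k => ∫ τ in a..b, G k (τ, y k τ)) atTop (𝓝 (∫ τ in a..b, F (τ, z τ))) := by
  refine intervalIntegral.tendsto_integral_filter_of_dominated_convergence (fun _ => M)
    (Eventually.of_forall fun k => ?_) (Eventually.of_forall fun k => ?_)
    intervalIntegrable_const (ae_of_all _ fun τ hτ => ?_)
  · exact ((hG k).comp (continuous_id.prodMk (hy k))).aestronglyMeasurable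
  · exact ae_of_all _ fun τ hτ => hGM k _ (hyK k τ (uIoc_subset_uIcc hτ))
  · refine hGF.tendsto_comp hF.continuousWithinAt (tendsto_nhdsWithin_iff.2 ⟨?_, ?_⟩)
    · exact tendsto_const_nhds.prodMk_nhds (hyz τ)
    · exact Eventually.of_forall fun k => hyK k τ (uIoc_subset_uIcc hτ)

variable [NormedSpace ℝ E]

theorem IsPicardLindelof.of_contDiff [FiniteDimensional ℝ E] {G : ℝ × E → E}
    (hG : ContDiff ℝ 1 G) {t₀ ε : ℝ} (hε : 0 ≤ ε) (hε₁ : ε ≤ 1) {x₀ : E} {M : ℝ≥0}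
    (hM : ∀ p ∈ closedBall (t₀, x₀) 1, ‖G p‖ ≤ M) (hεM : M * ε ≤ 1) :
    ∃ K, IsPicardLindelof (fun t x => G (t, x))
      (⟨t₀, by constructor <;> linarith⟩ : Icc (t₀ - ε) (t₀ + ε)) x₀ 1 0 M K := by
  obtain ⟨K, hK⟩ := hG.contDiffOn.exists_lipschitzOnWith one_ne_zero (convex_closedBall _ _)
    (isCompact_closedBall _ _)
  have hmem (t) (ht : t ∈ Icc (t₀ - ε) (t₀ + ε)) (x) (hx : x ∈ closedBall x₀ 1) :=
    mk_mem_closedBall_of_mem_Icc hε₁ ht hx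
  refine ⟨K, fun t ht => ?_, fun x hx => ?_, fun t ht x hx => hM _ (hmem t ht x hx), ?_⟩
  · simpa only [mul_one, NNReal.coe_one, Function.comp_def] using
      hK.comp (LipschitzWith.prodMk_left t).lipschitzOnWith (hmem t ht)
  · exact (hG.continuous.comp (Continuous.prodMk_left x)).continuousOn
  · simpa using hεM

/-- Unlike the public existence theorems, the fixed point in `ODE.FunSpace` comes with its
Lipschitz bound and stays in the ball. -/
theorem IsPicardLindelof.exists_lipschitzWith_eq_integral [CompleteSpace E] {f : ℝ → E → E}
    {tmin tmax : ℝ} {t₀ : Icc tmin tmax} {x₀ : E} {a L K : ℝ≥0}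
    (hf : IsPicardLindelof f t₀ x₀ a 0 L K) :
    ∃ α : Icc tmin tmax → E, LipschitzWith L α ∧ (∀ t, α t ∈ closedBall x₀ a) ∧
      ∀ t, α t = x₀ + ∫ τ in t₀..t, f τ (IccExtend (t₀.2.1.trans t₀.2.2) α τ) := by
  obtain ⟨α, hα⟩ := ODE.FunSpace.exists_isFixedPt_next hf (mem_closedBall_self le_rfl)
  refine ⟨α, α.lipschitzWith, fun t => α.mem_closedBall hf.mul_max_le, fun t => ?_⟩
  conv_lhs => rw [← hα]
  rfl

theorem exists_forall_mem_Icc_eq_integral [FiniteDimensional ℝ E] {F : ℝ × E → E}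
    (hF : Continuous F) (t₀ : ℝ) (x₀ : E) :
    ∃ ε > 0, ∃ y : ℝ → E, Continuous y ∧
      ∀ t ∈ Icc (t₀ - ε) (t₀ + ε), y t = x₀ + ∫ τ in t₀..t, F (τ, y τ) := by
  have hK : IsCompact (closedBall ((t₀, x₀) : ℝ × E) 1) := isCompact_closedBall _ _
  obtain ⟨C, hC⟩ := hK.exists_bound_of_continuousOn hF.continuousOn
  have hC₀ : 0 ≤ C := (norm_nonneg _).trans (hC _ (mem_closedBall_self zero_le_one))
  obtain ⟨G, hG, hGM, hGF⟩ := hF.exists_seq_contDiff_norm_le_tendstoUniformlyOn hK hC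
  set M : ℝ≥0 := ⟨C + 1, by positivity⟩
  set ε : ℝ := min 1 (1 / M)
  have hM : (0 : ℝ) < M := by change 0 < C + 1; positivity
  have hε : 0 < ε := lt_min one_pos (by positivity)
  have hεM : M * ε ≤ 1 := by
    calc (M : ℝ) * ε ≤ M * (1 / M) := by gcongr; exact min_le_right _ _
      _ = 1 := by field_simp
  have ht₀ : t₀ ∈ Icc (t₀ - ε) (t₀ + ε) := ⟨by linarith, by linarith⟩
  have hab : t₀ - ε ≤ t₀ + ε := ht₀.1.trans ht₀.2
  choose α hα_lip hα_mem hα_eq using fun k => (IsPicardLindelof.of_contDiff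
    ((hG k).of_le (by simp)) hε.le (min_le_left _ _) (hGM k) hεM).choose_spec
    |>.exists_lipschitzWith_eq_integral
  obtain ⟨g, hg, φ, hφ, hlim⟩ :=
    exists_subseq_tendsto_of_lipschitzWith (isCompact_closedBall x₀ 1) hα_lip hα_mem
  refine ⟨ε, hε, IccExtend hab g, hg.Icc_extend', fun t ht => ?_⟩
  have hK_mem (k) (τ) (hτ : τ ∈ uIcc t₀ t) :
      (τ, IccExtend hab (α k) τ) ∈ closedBall (t₀, x₀) 1 :=
    mk_mem_closedBall_of_mem_Icc (min_le_left _ _) (uIcc_subset_Icc ht₀ ht hτ)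
      (by simpa [IccExtend] using hα_mem k _)
  have hint := tendsto_integral_comp_of_tendstoUniformlyOn hF (fun k => (hG (φ k)).continuous)
    (fun u hu => hφ.tendsto_atTop.eventually (hGF u hu)) (fun k => hGM (φ k))
    (fun k => (hα_lip (φ k)).continuous.Icc_extend') (fun τ => hlim _) (fun k => hK_mem (φ k))
  rw [IccExtend_of_mem hab g ht]
  exact tendsto_nhds_unique (hlim ⟨t, ht⟩)
    ((tendsto_const_nhds.add hint).congr fun j => (hα_eq _ _).symm)

theorem exists_contDiff_hasDerivAt_of_forall_eq_integral [CompleteSpace E] {F : ℝ × E → E}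
    (hF : Continuous F) {y : ℝ → E} (hy : Continuous y) {t₀ : ℝ} {x₀ : E} {s : Set ℝ}
    (hys : ∀ t ∈ s, y t = x₀ + ∫ τ in t₀..t, F (τ, y τ)) :
    ∃ x : ℝ → E, ContDiff ℝ 1 x ∧ x t₀ = x₀ ∧ ∀ t ∈ s, HasDerivAt x (F (t, x t)) t := by
  have hFy : Continuous fun τ => F (τ, y τ) := hF.comp (continuous_id.prodMk hy)
  set x : ℝ → E := fun t => x₀ + ∫ τ in t₀..t, F (τ, y τ)
  have hx (t) : HasDerivAt x (F (t, y t)) t :=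
    (hFy.integral_hasStrictDerivAt t₀ t).hasDerivAt.const_add x₀
  refine ⟨x, contDiff_one_iff_deriv.2 ⟨fun t => (hx t).differentiableAt, ?_⟩, by simp [x],
    fun t ht => by rw [show x t = y t from (hys t ht).symm]; exact hx t⟩
  rwa [show deriv x = fun t => F (t, y t) from funext fun t => (hx t).deriv]

theorem peano_existence_general (n : ℕ)
    (F : ℝ × EuclideanSpace ℝ (Fin n) → EuclideanSpace ℝ (Fin n)) (hF : Continuous F)
    (t₀ : ℝ) (x₀ : EuclideanSpace ℝ (Fin n)) :
    ∃ ε > (0 : ℝ), ∃ x : ℝ → EuclideanSpace ℝ (Fin n),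
      ContDiffOn ℝ 1 x (Ioo (t₀ - ε) (t₀ + ε)) ∧
      x t₀ = x₀ ∧
      ∀ t ∈ Ioo (t₀ - ε) (t₀ + ε), HasDerivAt x (F (t, x t)) t := by
  obtain ⟨ε, hε, y, hy, hy_eq⟩ := exists_forall_mem_Icc_eq_integral hF t₀ x₀
  obtain ⟨x, hx, hx₀, hx'⟩ := exists_contDiff_hasDerivAt_of_forall_eq_integral hF hy hy_eq
  exact ⟨ε, hε, x, hx.contDiffOn, hx₀, fun t ht => hx' t (Ioo_subset_Icc_self ht)⟩

/-- **Peano existence theorem.** For any continuous `F : ℝ × ℝⁿ → ℝⁿ` and any initial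
condition `(t₀, x₀)`, there exist `ε > 0` and a continuously differentiable local solution
`x` on `(t₀ - ε, t₀ + ε)` of the ODE `x' = F(t, x)` with `x t₀ = x₀`.  No Lipschitz
hypothesis on `F` is required. -/
theorem peano_existence (n : ℕ) (hn : 1 ≤ n)
    (F : ℝ × EuclideanSpace ℝ (Fin n) → EuclideanSpace ℝ (Fin n)) (hF : Continuous F)
    (t₀ : ℝ) (x₀ : EuclideanSpace ℝ (Fin n)) :
    ∃ ε > (0 : ℝ), ∃ x : ℝ → EuclideanSpace ℝ (Fin n),
      ContDiffOn ℝ 1 x (Ioo (t₀ - ε) (t₀ + ε)) ∧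
      x t₀ = x₀ ∧
      ∀ t ∈ Ioo (t₀ - ε) (t₀ + ε), HasDerivAt x (F (t, x t)) t :=
  peano_existence_general n F hF t₀ x₀
end
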